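/- Let D be a finite index set and A, B complex D×D matrices. Suppose there exist vectors u_x, v_y (x, y ∈ D) in a finite-dimensional complex inner product space such that A_{x,y} = ⟨u_x|v_y⟩ for all x, y, and ‖u_x‖² ≤ c and ‖v_y‖² ≤ c for all x, y, where c ≥ 0. Then ‖A∘B‖ ≤ c·‖B‖. (This expresses the bound ‖A∘B‖ ≤ γ₂(A)·‖B‖, where γ₂(A) is the least such c over all factorizations of A.) -/

import Mathlib

open scoped Matrix

/-- The operator (spectral) norm of a complex matrix, i.e. the operator norm of its
action on the Euclidean space `ℂ^m`. -/
noncomputable def matOpNorm {m : Type*} [Fintype m] [DecidableEq m]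
    (M : Matrix m m ℂ) : ℝ :=
  ‖Matrix.toEuclideanCLM (𝕜 := ℂ) M‖

/-!
In an orthonormal basis of `E`, `A x y = ∑ i, conj (u x i) * v y i`, so
`A ⊙ B = ∑ i, D_iᴴ * B * D'_i` with the diagonal matrices `D_i = diag (u · i)` and
`D'_i = diag (v · i)`. Hence `⟪ψ, (A ⊙ B) φ⟫ = ∑ i, ⟪D_i ψ, B (D'_i φ)⟫`, and Cauchy–Schwarz over `i`
bounds it by `‖B‖ * √(∑ i, ‖D_i ψ‖²) * √(∑ i, ‖D'_i φ‖²) ≤ ‖B‖ * c * ‖ψ‖ * ‖φ‖`, because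
`∑ i, ‖D_i ψ‖² = ∑ x, ‖u x‖² * ‖ψ x‖² ≤ c * ‖ψ‖²`.
-/

open scoped InnerProductSpace InnerProduct

section OperatorBound

open ContinuousLinearMap

variable {𝕜 H K H' K' ι : Type*} [RCLike 𝕜]
  [NormedAddCommGroup H] [InnerProductSpace 𝕜 H]
  [NormedAddCommGroup K] [InnerProductSpace 𝕜 K]

theorem ContinuousLinearMap.opNorm_le_of_norm_inner_le (S : H →L[𝕜] K) {C : ℝ} (hC : 0 ≤ C)
    (h : ∀ x y, ‖⟪y, S x⟫_𝕜‖ ≤ C * ‖y‖ * ‖x‖) : ‖S‖ ≤ C := by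
  refine S.opNorm_le_bound hC fun x => ?_
  rcases (norm_nonneg (S x)).eq_or_lt with hSx | hSx
  · rw [← hSx]; positivity
  · refine le_of_mul_le_mul_left ?_ hSx
    calc ‖S x‖ * ‖S x‖ = ‖⟪S x, S x⟫_𝕜‖ := by
          rw [inner_self_eq_norm_sq_to_K, norm_pow, RCLike.norm_ofReal, abs_norm, sq]
      _ ≤ ‖S x‖ * (C * ‖x‖) := by linarith [h x (S x)]

variable [NormedAddCommGroup H'] [InnerProductSpace 𝕜 H']
  [NormedAddCommGroup K'] [InnerProductSpace 𝕜 K'] [CompleteSpace H] [CompleteSpace K] [Fintype ι]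

theorem norm_sum_adjoint_comp_comp_le (T : K' →L[𝕜] K) (X : ι → H →L[𝕜] K)
    (Y : ι → H' →L[𝕜] K') {c : ℝ} (hc : 0 ≤ c)
    (hX : ∀ x, ∑ i, ‖X i x‖ ^ 2 ≤ c * ‖x‖ ^ 2) (hY : ∀ y, ∑ i, ‖Y i y‖ ^ 2 ≤ c * ‖y‖ ^ 2) :
    ‖∑ i, (X i)† ∘L T ∘L Y i‖ ≤ c * ‖T‖ := by
  refine opNorm_le_of_norm_inner_le _ (by positivity) fun y x => ?_
  calc ‖⟪x, (∑ i, (X i)† ∘L T ∘L Y i) y⟫_𝕜‖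
      = ‖∑ i, ⟪X i x, T (Y i y)⟫_𝕜‖ := by
        simp only [sum_apply, inner_sum, comp_apply, adjoint_inner_right]
    _ ≤ ∑ i, ‖T‖ * (‖X i x‖ * ‖Y i y‖) := by
        refine (norm_sum_le _ _).trans (Finset.sum_le_sum fun i _ => ?_)
        calc ‖⟪X i x, T (Y i y)⟫_𝕜‖ ≤ ‖X i x‖ * (‖T‖ * ‖Y i y‖) :=
              (norm_inner_le_norm _ _).trans (by gcongr; exact T.le_opNorm _)
          _ = ‖T‖ * (‖X i x‖ * ‖Y i y‖) := by ring
    _ ≤ ‖T‖ * (√(c * ‖x‖ ^ 2) * √(c * ‖y‖ ^ 2)) := by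
        rw [← Finset.mul_sum]
        gcongr
        refine (Real.sum_mul_le_sqrt_mul_sqrt _ _ _).trans ?_
        gcongr
        exacts [hX x, hY y]
    _ = c * ‖T‖ * ‖x‖ * ‖y‖ := by
        rw [Real.sqrt_mul hc, Real.sqrt_mul hc, Real.sqrt_sq (norm_nonneg _),
          Real.sqrt_sq (norm_nonneg _)]
        linear_combination ‖T‖ * ‖x‖ * ‖y‖ * Real.mul_self_sqrt hc

end OperatorBound

section Hadamard

open Matrix

variable {𝕜 D ι : Type*} [RCLike 𝕜] [Fintype D] [DecidableEq D] [Fintype ι]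

theorem Matrix.hadamard_eq_sum_conjTranspose_diagonal_mul_mul_diagonal (A B : Matrix D D 𝕜)
    (u v : D → EuclideanSpace 𝕜 ι) (hA : ∀ x y, A x y = ⟪u x, v y⟫_𝕜) :
    A ⊙ B = ∑ i, (diagonal fun x => u x i)ᴴ * B * diagonal fun y => v y i := by
  ext x y
  simp only [hadamard_apply, hA, PiLp.inner_apply, RCLike.inner_apply, Finset.sum_mul,
    diagonal_conjTranspose, sum_apply, mul_diagonal, diagonal_mul, Pi.star_apply, RCLike.star_def]
  exact Finset.sum_congr rfl fun i _ => by ring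

theorem sum_norm_toEuclideanCLM_diagonal_sq_le (w : D → EuclideanSpace 𝕜 ι) {c : ℝ}
    (hw : ∀ x, ‖w x‖ ^ 2 ≤ c) (ψ : EuclideanSpace 𝕜 D) :
    ∑ i, ‖toEuclideanCLM (𝕜 := 𝕜) (diagonal fun x => w x i) ψ‖ ^ 2 ≤ c * ‖ψ‖ ^ 2 := by
  calc ∑ i, ‖toEuclideanCLM (𝕜 := 𝕜) (diagonal fun x => w x i) ψ‖ ^ 2
      = ∑ x, ‖w x‖ ^ 2 * ‖ψ x‖ ^ 2 := by
        simp only [EuclideanSpace.norm_sq_eq, ofLp_toEuclideanCLM, mulVec_diagonal, norm_mul,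
          mul_pow]
        rw [Finset.sum_comm]
        simp only [← Finset.sum_mul]
    _ ≤ ∑ x, c * ‖ψ x‖ ^ 2 := by gcongr; exact hw _
    _ = c * ‖ψ‖ ^ 2 := by rw [← Finset.mul_sum, EuclideanSpace.norm_sq_eq]

theorem norm_toEuclideanCLM_hadamard_le {E : Type*} [NormedAddCommGroup E]
    [InnerProductSpace 𝕜 E] [FiniteDimensional 𝕜 E] (A B : Matrix D D 𝕜) (u v : D → E) {c : ℝ}
    (hc : 0 ≤ c) (hA : ∀ x y, A x y = ⟪u x, v y⟫_𝕜) (hu : ∀ x, ‖u x‖ ^ 2 ≤ c)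
    (hv : ∀ y, ‖v y‖ ^ 2 ≤ c) :
    ‖toEuclideanCLM (𝕜 := 𝕜) (A ⊙ B)‖ ≤ c * ‖toEuclideanCLM (𝕜 := 𝕜) B‖ := by
  set b := stdOrthonormalBasis 𝕜 E
  have hA' : ∀ x y, A x y = ⟪b.repr (u x), b.repr (v y)⟫_𝕜 := by
    simp only [LinearIsometryEquiv.inner_map_map, hA, implies_true]
  rw [hadamard_eq_sum_conjTranspose_diagonal_mul_mul_diagonal A B _ _ hA', map_sum]
  simp only [map_mul, ← star_eq_conjTranspose, map_star, ContinuousLinearMap.star_eq_adjoint,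
    ContinuousLinearMap.mul_def, ContinuousLinearMap.comp_assoc]
  exact norm_sum_adjoint_comp_comp_le _ _ _ hc
    (sum_norm_toEuclideanCLM_diagonal_sq_le _ (by simpa only [LinearIsometryEquiv.norm_map]))
    (sum_norm_toEuclideanCLM_diagonal_sq_le _ (by simpa only [LinearIsometryEquiv.norm_map]))

end Hadamard

theorem stmt4
    {D : Type*} [Fintype D] [DecidableEq D]
    {E : Type*} [NormedAddCommGroup E] [InnerProductSpace ℂ E] [FiniteDimensional ℂ E]
    (A B : Matrix D D ℂ) (u v : D → E) (c : ℝ) (hc : 0 ≤ c)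
    (hA : ∀ x y : D, A x y = inner ℂ (u x) (v y))
    (hu : ∀ x : D, ‖u x‖ ^ 2 ≤ c) (hv : ∀ y : D, ‖v y‖ ^ 2 ≤ c) :
    matOpNorm (A ⊙ B) ≤ c * matOpNorm B :=
  norm_toEuclideanCLM_hadamard_le A B u v hc hA hu hv
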